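/- Let r ≥ 1, let U ⊆ ℂ be open, let z ∈ U, let θ : U → M_r(ℂ) be twice differentiable at z with θ invertible in a neighborhood of z, and let A : U → M_r(ℂ) be differentiable at z. Define the matrix-valued function A₁ := θ⁻¹Aθ + θ⁻¹θ′ near z, where ′ denotes the entrywise derivative. Then at z: (1/2)·Tr(A₁′) + (1/2)·Tr(A₁·A₁) = (1/2)·Tr(A′) + (1/2)·Tr(A·A) + Tr(θ⁻¹·A·θ′) + (1/2)·Tr(θ⁻¹·θ″). -/

import Mathlib

open Matrix

/-- Entrywise derivative of a matrix-valued function of one complex variable. -/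
noncomputable def mderiv {r : ℕ} (f : ℂ → Matrix (Fin r) (Fin r) ℂ) (z : ℂ) :
    Matrix (Fin r) (Fin r) ℂ :=
  Matrix.of fun i j => deriv (fun w => f w i j) z

/-- Entrywise differentiability of a matrix-valued function at a point. -/
def MatDifferentiableAt {r : ℕ} (f : ℂ → Matrix (Fin r) (Fin r) ℂ) (z : ℂ) : Prop :=
  ∀ i j, DifferentiableAt ℂ (fun w => f w i j) z

/-!
Both sides are computed from the product rule and `(θ⁻¹)′ = -θ⁻¹θ′θ⁻¹`. By cyclicity of the
trace, the conjugates `θ⁻¹Xθ` lose their conjugation, the four mixed terms all reduce to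
`±Tr(θ⁻¹Aθ′)` (three with sign `+`, one with sign `-`), and the two copies of `Tr(θ⁻¹θ′θ⁻¹θ′)`
cancel.
-/

section Calculus

variable {r : ℕ} {f g : ℂ → Matrix (Fin r) (Fin r) ℂ} {z : ℂ}

theorem MatDifferentiableAt.add (hf : MatDifferentiableAt f z) (hg : MatDifferentiableAt g z) :
    MatDifferentiableAt (fun w => f w + g w) z :=
  fun i j => (hf i j).add (hg i j)

theorem MatDifferentiableAt.mul (hf : MatDifferentiableAt f z) (hg : MatDifferentiableAt g z) :
    MatDifferentiableAt (fun w => f w * g w) z := by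
  intro i j
  simp only [Matrix.mul_apply]
  exact DifferentiableAt.fun_sum fun k _ => (hf i k).mul (hg k j)

theorem MatDifferentiableAt.differentiableAt_det (hf : MatDifferentiableAt f z) :
    DifferentiableAt ℂ (fun w => (f w).det) z := by
  simp only [Matrix.det_apply']
  exact DifferentiableAt.fun_sum fun σ _ =>
    (DifferentiableAt.fun_finsetProd fun i _ => hf (σ i) i).const_mul _

theorem MatDifferentiableAt.adjugate (hf : MatDifferentiableAt f z) :
    MatDifferentiableAt (fun w => (f w).adjugate) z := by
  intro i j
  simp only [Matrix.adjugate_apply]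
  refine MatDifferentiableAt.differentiableAt_det fun a b => ?_
  by_cases hab : a = j
  · subst hab
    simpa only [Matrix.updateRow_self] using differentiableAt_const _
  · simpa only [Matrix.updateRow_ne hab] using hf a b

theorem MatDifferentiableAt.inv (hf : MatDifferentiableAt f z) (hfz : IsUnit (f z)) :
    MatDifferentiableAt (fun w => (f w)⁻¹) z := by
  intro i j
  have hdet : (f z).det ≠ 0 := ((Matrix.isUnit_iff_isUnit_det _).mp hfz).ne_zero
  simp only [Matrix.inv_def, Ring.inverse_eq_inv, Matrix.smul_apply, smul_eq_mul]
  exact (hf.differentiableAt_det.inv hdet).mul (hf.adjugate i j)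

theorem mderiv_add (hf : MatDifferentiableAt f z) (hg : MatDifferentiableAt g z) :
    mderiv (fun w => f w + g w) z = mderiv f z + mderiv g z := by
  ext i j
  exact deriv_add (hf i j) (hg i j)

theorem mderiv_mul (hf : MatDifferentiableAt f z) (hg : MatDifferentiableAt g z) :
    mderiv (fun w => f w * g w) z = mderiv f z * g z + f z * mderiv g z := by
  ext i j
  simp only [mderiv, Matrix.of_apply, Matrix.add_apply, Matrix.mul_apply]
  exact (HasDerivAt.fun_sum fun k _ => (hf i k).hasDerivAt.mul (hg k j).hasDerivAt).deriv.trans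
    Finset.sum_add_distrib

theorem Filter.EventuallyEq.mderiv_eq (h : f =ᶠ[nhds z] g) : mderiv f z = mderiv g z := by
  ext i j
  exact Filter.EventuallyEq.deriv_eq (h.mono fun w hw => congrFun (congrFun hw i) j)

theorem mderiv_const (M : Matrix (Fin r) (Fin r) ℂ) : mderiv (fun _ => M) z = 0 := by
  ext i j
  simp [mderiv]

theorem mderiv_inv (hf : MatDifferentiableAt f z) (hunit : ∀ᶠ w in nhds z, IsUnit (f w)) :
    mderiv (fun w => (f w)⁻¹) z = -((f z)⁻¹ * mderiv f z * (f z)⁻¹) := by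
  have hfz : IsUnit (f z) := hunit.self_of_nhds
  have hleft : (fun w => (f w)⁻¹ * f w) =ᶠ[nhds z] fun _ => 1 :=
    hunit.mono fun w hw => Matrix.nonsing_inv_mul _ ((Matrix.isUnit_iff_isUnit_det _).mp hw)
  have hprod : mderiv (fun w => (f w)⁻¹) z * f z + (f z)⁻¹ * mderiv f z = 0 := by
    rw [← mderiv_mul (hf.inv hfz) hf, hleft.mderiv_eq, mderiv_const]
  calc mderiv (fun w => (f w)⁻¹) z
      = (mderiv (fun w => (f w)⁻¹) z * f z + (f z)⁻¹ * mderiv f z) * (f z)⁻¹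
          - (f z)⁻¹ * mderiv f z * (f z)⁻¹ := by
        rw [add_mul, Matrix.mul_assoc _ (f z), Matrix.mul_nonsing_inv _
          ((Matrix.isUnit_iff_isUnit_det _).mp hfz), Matrix.mul_one]
        abel
    _ = -((f z)⁻¹ * mderiv f z * (f z)⁻¹) := by rw [hprod, zero_mul, zero_sub]

theorem mderiv_gaugeTransform {θ A : ℂ → Matrix (Fin r) (Fin r) ℂ}
    (hθ : MatDifferentiableAt θ z) (hθ' : MatDifferentiableAt (mderiv θ) z)
    (hunit : ∀ᶠ w in nhds z, IsUnit (θ w)) (hA : MatDifferentiableAt A z) :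
    mderiv (fun w => (θ w)⁻¹ * A w * θ w + (θ w)⁻¹ * mderiv θ w) z
      = -((θ z)⁻¹ * mderiv θ z * (θ z)⁻¹ * A z * θ z) + (θ z)⁻¹ * mderiv A z * θ z
        + (θ z)⁻¹ * A z * mderiv θ z - (θ z)⁻¹ * mderiv θ z * ((θ z)⁻¹ * mderiv θ z)
        + (θ z)⁻¹ * mderiv (mderiv θ) z := by
  have hθinv := hθ.inv hunit.self_of_nhds
  rw [mderiv_add ((hθinv.mul hA).mul hθ) (hθinv.mul hθ'), mderiv_mul (hθinv.mul hA) hθ,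
    mderiv_mul hθinv hA, mderiv_mul hθinv hθ', mderiv_inv hθ hunit]
  noncomm_ring

end Calculus

section TraceIdentity

variable {n R : Type*} [Fintype n] [DecidableEq n] [CommRing R]

theorem trace_conj_of_mul_eq_one {B T : Matrix n n R} (h : T * B = 1) (X : Matrix n n R) :
    trace (B * X * T) = trace X := by
  rw [trace_mul_cycle, h, Matrix.one_mul]

theorem trace_gaugeTransform_add_sq {B T : Matrix n n R} (h : T * B = 1)
    (A A' P Q : Matrix n n R) :
    trace (-(B * P * B * A * T) + B * A' * T + B * A * P - B * P * (B * P) + B * Q)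
        + trace ((B * A * T + B * P) * (B * A * T + B * P))
      = trace A' + trace (A * A) + 2 * trace (B * A * P) + trace (B * Q) := by
  have hPBA : trace (P * B * A) = trace (B * A * P) := by
    rw [Matrix.mul_assoc, trace_mul_comm]
  have h₁ : trace (B * P * B * A * T) = trace (B * A * P) := by
    rw [show B * P * B * A * T = B * (P * B * A) * T by noncomm_ring,
      trace_conj_of_mul_eq_one h, hPBA]
  have h₂ : trace (B * A * T * (B * A * T)) = trace (A * A) := by
    rw [show B * A * T * (B * A * T) = B * (A * (T * B) * A) * T by noncomm_ring,
      trace_conj_of_mul_eq_one h, h, Matrix.mul_one]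
  have h₃ : trace (B * A * T * (B * P)) = trace (B * A * P) := by
    rw [show B * A * T * (B * P) = B * A * (T * B) * P by noncomm_ring, h, Matrix.mul_one]
  have h₄ : trace (B * P * (B * A * T)) = trace (B * A * P) := by
    rw [show B * P * (B * A * T) = B * (P * B * A) * T by noncomm_ring,
      trace_conj_of_mul_eq_one h, hPBA]
  simp only [add_mul, mul_add, trace_add, trace_sub, trace_neg,
    trace_conj_of_mul_eq_one h, h₁, h₂, h₃, h₄]
  ring

end TraceIdentity

theorem stmt3_general (r : ℕ) (U : Set ℂ) (z : ℂ) (hz : z ∈ U)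
    (θ A : ℂ → Matrix (Fin r) (Fin r) ℂ)
    (hθ : ∀ w ∈ U, MatDifferentiableAt θ w)
    (hθ' : MatDifferentiableAt (fun w => mderiv θ w) z)
    (hinv : ∀ᶠ w in nhds z, IsUnit (θ w))
    (hA : MatDifferentiableAt A z)
    (A₁ : ℂ → Matrix (Fin r) (Fin r) ℂ)
    (hA₁ : ∀ w, A₁ w = (θ w)⁻¹ * A w * θ w + (θ w)⁻¹ * mderiv θ w) :
    (1 / 2 : ℂ) * trace (mderiv A₁ z) + (1 / 2 : ℂ) * trace (A₁ z * A₁ z)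
      = (1 / 2 : ℂ) * trace (mderiv A z) + (1 / 2 : ℂ) * trace (A z * A z)
          + trace ((θ z)⁻¹ * A z * mderiv θ z)
          + (1 / 2 : ℂ) * trace ((θ z)⁻¹ * mderiv (fun w => mderiv θ w) z) := by
  have hθinv : θ z * (θ z)⁻¹ = 1 :=
    Matrix.mul_nonsing_inv _ ((Matrix.isUnit_iff_isUnit_det _).mp hinv.self_of_nhds)
  rw [funext hA₁, mderiv_gaugeTransform (hθ z hz) hθ' hinv hA]
  linear_combination (1 / 2 : ℂ) *
    trace_gaugeTransform_add_sq hθinv (A z) (mderiv A z) (mderiv θ z) (mderiv (mderiv θ) z)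

/-- the local data (A df, ½Tr(dA ⊗ df) + ½Tr(A df ⊗ A df)) of the
extended connection ∇_Ex transform by the extended-connection rule:
with A₁ := θ⁻¹Aθ + θ⁻¹θ′ one has, at z,
½Tr(A₁′) + ½Tr(A₁A₁) = ½Tr(A′) + ½Tr(AA) + Tr(θ⁻¹Aθ′) + ½Tr(θ⁻¹θ″). -/
theorem stmt3 (r : ℕ) (hr : 1 ≤ r) (U : Set ℂ) (hU : IsOpen U) (z : ℂ) (hz : z ∈ U)
    (θ A : ℂ → Matrix (Fin r) (Fin r) ℂ)
    (hθ : ∀ w ∈ U, MatDifferentiableAt θ w)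
    (hθ' : MatDifferentiableAt (fun w => mderiv θ w) z)
    (hinv : ∀ᶠ w in nhds z, IsUnit (θ w))
    (hA : MatDifferentiableAt A z)
    (A₁ : ℂ → Matrix (Fin r) (Fin r) ℂ)
    (hA₁ : ∀ w, A₁ w = (θ w)⁻¹ * A w * θ w + (θ w)⁻¹ * mderiv θ w) :
    (1 / 2 : ℂ) * trace (mderiv A₁ z) + (1 / 2 : ℂ) * trace (A₁ z * A₁ z)
      = (1 / 2 : ℂ) * trace (mderiv A z) + (1 / 2 : ℂ) * trace (A z * A z)
          + trace ((θ z)⁻¹ * A z * mderiv θ z)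
          + (1 / 2 : ℂ) * trace ((θ z)⁻¹ * mderiv (fun w => mderiv θ w) z) :=
  stmt3_general r U z hz θ A hθ hθ' hinv hA A₁ hA₁
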